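/- arXiv:2205.00676 — 3 statements merged into one kernel-verified Lean document; each statement's English description precedes it below -/
import Mathlib

section
/- Let s ∈ (0,1) and G(x,y) = −log|x−y| for x, y on the unit circle. There exists C = C(s) such that for all u, v ∈ B(0, s), the quantity ∬_{∂B(0,1)×∂B(0,1)} (P(u,x) − P(v,x)) G(x,y) (P(u,y) − P(v,y)) dσ(x) dσ(y) is at most C |u − v|², where σ is the uniform probability measure on ∂B(0,1) and P is the Poisson kernel. -/
/-- The Poisson kernel of the unit disk: `P(x, y) = (1 - |x|²)/(2π |x - y|²)`. -/
noncomputable def poissonKernelUnitDisk (x y : ℂ) : ℝ :=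
  (1 - ‖x‖ ^ 2) / (2 * Real.pi * ‖x - y‖ ^ 2)

/-! For `‖u‖, ‖v‖ ≤ s` the difference `D = P(u, ·) - P(v, ·)` is bounded on the unit circle by
`L ‖u - v‖` with `L = 6 / (π (1 - s)⁴)`, directly from the formula for `P`, since `‖u - y‖` and
`‖v - y‖` stay in `[1 - s, 2]`. The double average of `D(x) (-log ‖x - y‖) D(y)` is then at most
`L² ‖u - v‖²` times the average over `y` of `|log ‖x - y‖|`. As `‖x - y‖ ≤ 2`, this is bounded by
`2 log 2 - log ‖y - x‖`, whose average is `2 log 2` because the circle average of `log ‖· - x‖`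
vanishes for `‖x‖ ≤ 1` (Jensen). -/

open Real Metric

lemma abs_sq_sub_sq_le {a b R : ℝ} (ha : 0 ≤ a) (hb : 0 ≤ b) (haR : a ≤ R) (hbR : b ≤ R) :
    |a ^ 2 - b ^ 2| ≤ 2 * R * |a - b| := by
  rw [sq_sub_sq, abs_mul, abs_of_nonneg (add_nonneg ha hb)]
  gcongr
  linarith

lemma poissonKernelUnitDisk_sub_eq {u v y : ℂ} (hu : u ≠ y) (hv : v ≠ y) :
    poissonKernelUnitDisk u y - poissonKernelUnitDisk v y =
      ((‖v‖ ^ 2 - ‖u‖ ^ 2) * ‖v - y‖ ^ 2 + (1 - ‖v‖ ^ 2) * (‖v - y‖ ^ 2 - ‖u - y‖ ^ 2)) /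
        (2 * π * ‖u - y‖ ^ 2 * ‖v - y‖ ^ 2) := by
  have hu' : ‖u - y‖ ≠ 0 := norm_ne_zero_iff.2 (sub_ne_zero.2 hu)
  have hv' : ‖v - y‖ ≠ 0 := norm_ne_zero_iff.2 (sub_ne_zero.2 hv)
  unfold poissonKernelUnitDisk
  field_simp
  ring

lemma abs_poissonKernelUnitDisk_sub_le {s : ℝ} (hs : s < 1) {u v y : ℂ} (hu : ‖u‖ ≤ s)
    (hv : ‖v‖ ≤ s) (hy : ‖y‖ = 1) :
    |poissonKernelUnitDisk u y - poissonKernelUnitDisk v y| ≤ 6 / (π * (1 - s) ^ 4) * ‖u - v‖ := by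
  have dist_le {w : ℂ} (hw : ‖w‖ ≤ s) : 1 - s ≤ ‖w - y‖ ∧ ‖w - y‖ ≤ 2 := by
    constructor
    · linarith [norm_sub_norm_le y w, norm_sub_rev y w]
    · linarith [norm_sub_le w y]
  obtain ⟨hau, hau'⟩ := dist_le hu
  obtain ⟨hav, hav'⟩ := dist_le hv
  have hs' : 0 < 1 - s := by linarith
  have hnum : |(‖v‖ ^ 2 - ‖u‖ ^ 2) * ‖v - y‖ ^ 2 + (1 - ‖v‖ ^ 2) * (‖v - y‖ ^ 2 - ‖u - y‖ ^ 2)|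
      ≤ 12 * ‖u - v‖ := by
    have h1 : |‖v‖ ^ 2 - ‖u‖ ^ 2| ≤ 2 * 1 * ‖u - v‖ :=
      (abs_sq_sub_sq_le (R := 1) (norm_nonneg _) (norm_nonneg _) (by linarith) (by linarith)).trans
        (by rw [norm_sub_rev]; gcongr; exact abs_norm_sub_norm_le v u)
    have h2 : |‖v - y‖ ^ 2 - ‖u - y‖ ^ 2| ≤ 2 * 2 * ‖u - v‖ :=
      (abs_sq_sub_sq_le (norm_nonneg _) (norm_nonneg _) hav' hau').trans
        (by rw [norm_sub_rev u v, ← sub_sub_sub_cancel_right v u y]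
            gcongr; exact abs_norm_sub_norm_le _ _)
    have h3 : |1 - ‖v‖ ^ 2| ≤ 1 := by
      rw [abs_le]; constructor <;> nlinarith [norm_nonneg v]
    calc _ ≤ |‖v‖ ^ 2 - ‖u‖ ^ 2| * ‖v - y‖ ^ 2 + |1 - ‖v‖ ^ 2| * |‖v - y‖ ^ 2 - ‖u - y‖ ^ 2| := by
          refine (abs_add_le _ _).trans_eq ?_
          rw [abs_mul, abs_mul, abs_of_nonneg (sq_nonneg ‖v - y‖)]
      _ ≤ (2 * 1 * ‖u - v‖) * 2 ^ 2 + 1 * (2 * 2 * ‖u - v‖) := by gcongr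
      _ = 12 * ‖u - v‖ := by ring
  have hau0 : 0 < ‖u - y‖ := hs'.trans_le hau
  have hav0 : 0 < ‖v - y‖ := hs'.trans_le hav
  rw [poissonKernelUnitDisk_sub_eq (sub_ne_zero.1 (norm_pos_iff.1 hau0))
    (sub_ne_zero.1 (norm_pos_iff.1 hav0)), abs_div,
    abs_of_pos (by positivity : 0 < 2 * π * ‖u - y‖ ^ 2 * ‖v - y‖ ^ 2)]
  calc _ ≤ 12 * ‖u - v‖ / (2 * π * (1 - s) ^ 2 * (1 - s) ^ 2) :=
        div_le_div₀ (by positivity) hnum (by positivity) (by gcongr)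
    _ = 6 / (π * (1 - s) ^ 4) * ‖u - v‖ := by field_simp; ring

lemma abs_circleAverage_le_circleAverage {f g : ℂ → ℝ} {c : ℂ} {R : ℝ}
    (hg : CircleIntegrable g c R) (hfg : ∀ z ∈ sphere c |R|, |f z| ≤ g z) :
    |circleAverage f c R| ≤ circleAverage g c R := by
  rw [circleAverage_def, circleAverage_def, smul_eq_mul, smul_eq_mul, abs_mul,
    abs_of_pos (inv_pos.2 two_pi_pos)]
  gcongr
  exact intervalIntegral.norm_integral_le_of_norm_le two_pi_pos.le
    (.of_forall fun θ _ ↦ (norm_eq_abs _).trans_le (hfg _ (circleMap_mem_sphere' c R θ))) hg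

lemma circleAverage_circleAverage_eq_integral (f : ℂ → ℂ → ℝ) (c : ℂ) (R : ℝ) :
    circleAverage (fun x ↦ circleAverage (f x) c R) c R =
      (1 / (2 * π)) ^ 2 * ∫ θ in 0..2 * π, ∫ φ in 0..2 * π,
        f (circleMap c R θ) (circleMap c R φ) := by
  simp only [circleAverage_def, smul_eq_mul, intervalIntegral.integral_const_mul]
  ring

lemma abs_log_le_two_mul_log_two_sub_log {t : ℝ} (ht0 : 0 ≤ t) (ht2 : t ≤ 2) :
    |log t| ≤ 2 * log 2 - log t := by
  have hlog2 := log_nonneg one_le_two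
  rcases ht0.eq_or_lt with rfl | ht0
  · simpa using hlog2
  have := log_le_log ht0 ht2
  rw [abs_le]; constructor <;> linarith

lemma abs_circleAverage_mul_neg_log_mul_le {D : ℂ → ℝ} {M : ℝ}
    (hD : ∀ z ∈ sphere (0 : ℂ) 1, |D z| ≤ M) :
    |circleAverage (fun x ↦ circleAverage (fun y ↦ D x * -log ‖x - y‖ * D y) 0 1) 0 1| ≤
      2 * log 2 * M ^ 2 := by
  have hM : 0 ≤ M := (abs_nonneg _).trans (hD 1 (by simp))
  refine (abs_circleAverage_le_circleAverage (circleIntegrable_const _ _ _) fun x hx ↦ ?_).trans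
    (circleAverage_const _ _ _).le
  have hx1 : ‖x‖ = 1 := by simpa using hx
  have hint : CircleIntegrable (fun y ↦ M ^ 2 * (2 * log 2 - log ‖y - x‖)) 0 1 :=
    IntervalIntegrable.const_mul ((circleIntegrable_const _ _ _).sub
      (circleIntegrable_log_norm_sub_const 1)) _
  refine (abs_circleAverage_le_circleAverage hint fun y hy ↦ ?_).trans_eq ?_
  · have hy1 : ‖y‖ = 1 := by simpa using hy
    have hlog : |log ‖x - y‖| ≤ 2 * log 2 - log ‖y - x‖ := by
      rw [norm_sub_rev y x]
      exact abs_log_le_two_mul_log_two_sub_log (norm_nonneg _)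
        ((norm_sub_le x y).trans (by rw [hx1, hy1]; norm_num))
    rw [abs_mul, abs_mul, abs_neg]
    calc _ ≤ M * (2 * log 2 - log ‖y - x‖) * M :=
          mul_le_mul (mul_le_mul (hD x (by simpa using hx1)) hlog (abs_nonneg _) hM)
            (hD y (by simpa using hy1)) (abs_nonneg _)
            (mul_nonneg hM ((abs_nonneg _).trans hlog))
      _ = _ := by ring
  · change circleAverage (fun y ↦ M ^ 2 • (2 * log 2 - log ‖y - x‖)) 0 1 = _
    rw [circleAverage_fun_smul,
      circleAverage_fun_sub (circleIntegrable_const _ _ _) (circleIntegrable_log_norm_sub_const 1),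
      circleAverage_const, circleAverage_log_norm_sub_const_of_mem_closedBall (by simpa using hx1.le)]
    simp only [log_one, smul_eq_mul]
    ring

theorem stmt_10_general (s : ℝ) (hs1 : s < 1) :
    ∃ C > 0, ∀ u v : ℂ, ‖u‖ < s → ‖v‖ < s →
      (1 / (2 * Real.pi)) ^ 2 *
        ∫ θ in (0 : ℝ)..(2 * Real.pi), ∫ φ in (0 : ℝ)..(2 * Real.pi),
          (poissonKernelUnitDisk u (circleMap 0 1 θ) - poissonKernelUnitDisk v (circleMap 0 1 θ)) *
            (-Real.log ‖circleMap 0 1 θ - circleMap 0 1 φ‖) *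
            (poissonKernelUnitDisk u (circleMap 0 1 φ) - poissonKernelUnitDisk v (circleMap 0 1 φ)) ≤
      C * ‖u - v‖ ^ 2 := by
  set L := 6 / (π * (1 - s) ^ 4)
  refine ⟨2 * log 2 * L ^ 2, by positivity, fun u v hu hv ↦ ?_⟩
  have hD : ∀ z ∈ sphere (0 : ℂ) 1,
      |poissonKernelUnitDisk u z - poissonKernelUnitDisk v z| ≤ L * ‖u - v‖ := fun z hz ↦
    abs_poissonKernelUnitDisk_sub_le hs1 hu.le hv.le (by simpa using hz)
  have henergy := abs_circleAverage_mul_neg_log_mul_le hD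
  rw [circleAverage_circleAverage_eq_integral (fun x y ↦ _ * -log ‖x - y‖ * _)] at henergy
  calc _ ≤ _ := le_abs_self _
    _ ≤ _ := henergy
    _ = _ := by ring

theorem stmt_10 (s : ℝ) (hs0 : 0 < s) (hs1 : s < 1) :
    ∃ C > 0, ∀ u v : ℂ, ‖u‖ < s → ‖v‖ < s →
      (1 / (2 * Real.pi)) ^ 2 *
        ∫ θ in (0 : ℝ)..(2 * Real.pi), ∫ φ in (0 : ℝ)..(2 * Real.pi),
          (poissonKernelUnitDisk u (circleMap 0 1 θ) - poissonKernelUnitDisk v (circleMap 0 1 θ)) *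
            (-Real.log ‖circleMap 0 1 θ - circleMap 0 1 φ‖) *
            (poissonKernelUnitDisk u (circleMap 0 1 φ) - poissonKernelUnitDisk v (circleMap 0 1 φ)) ≤
      C * ‖u - v‖ ^ 2 :=
  stmt_10_general s hs1
end

section
/- Let (Ω, F, P) be a probability space and {F_j}_{j=1}^n, {F̃_j}_{j=1}^n, {H_j}_{j=1}^n events satisfying: (P1) F_j ⊆ F̃_j ∪ H_j for all j; (P2) F̃_j is independent of the σ-algebra generated by all H_i (i = 1,…,n) and all F̃_i with i ≠ j; (P3) P(F̃_j) ≤ c for some c ∈ (0,1). Let S := {j : H_j does not occur} (a random subset of {1,…,n}). Then for any K ∈ {1,…,n}: P(∩_{j=1}^n F_j) ≤ c^K + P(|S| < K). -/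
/-!
Partition Ω according to the value `s` of the random set `S`. On `{S = s}` every `F j` with
`j ∈ s` is contained in `F̃ j`, and since `{S = s}` lies in `σ(H)` the events `F̃ j`, `j ∈ s`,
can be split off one at a time by independence, each contributing a factor `c`. Summing
`c ^ |s| * P (S = s)` over the `s` with `K ≤ |s|` gives at most `c ^ K`; the remaining
outcomes have `|S| < K`.
-/

open MeasureTheory ProbabilityTheory MeasurableSpace

open scoped ENNReal

section

variable {Ω ι : Type*} {mΩ : MeasurableSpace Ω} {P : Measure Ω}

theorem measure_biInter_inter_le_pow {E : ι → Set Ω} {G : Set (Set Ω)} {a : ℝ≥0∞}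
    (hindep : ∀ j, Indep (generateFrom {E j}) (generateFrom (G ∪ {s | ∃ i, i ≠ j ∧ s = E i})) P)
    (hE : ∀ j, P (E j) ≤ a) (T : Finset ι) {B : Set Ω} (hB : MeasurableSet[generateFrom G] B) :
    P ((⋂ j ∈ T, E j) ∩ B) ≤ a ^ T.card * P B := by
  classical
  induction T using Finset.induction with
  | empty => simp
  | @insert j T hj ih =>
    have hrest : MeasurableSet[generateFrom (G ∪ {s | ∃ i, i ≠ j ∧ s = E i})]
        ((⋂ i ∈ T, E i) ∩ B) := by
      refine .inter (Finset.measurableSet_biInter T fun i hi => ?_)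
        (generateFrom_mono Set.subset_union_left _ hB)
      exact measurableSet_generateFrom (Or.inr ⟨i, fun h => hj (h ▸ hi), rfl⟩)
    calc P ((⋂ i ∈ insert j T, E i) ∩ B) = P (E j) * P ((⋂ i ∈ T, E i) ∩ B) := by
          rw [Finset.set_biInter_insert, Set.inter_assoc]
          exact (Indep_iff _ _ _).1 (hindep j) _ _ (measurableSet_generateFrom rfl) hrest
      _ ≤ a * (a ^ T.card * P B) := mul_le_mul' (hE j) ih
      _ = a ^ (insert j T).card * P B := by
          rw [Finset.card_insert_of_notMem hj, pow_succ', mul_assoc]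

open Classical in
/-- The random set `S` of the statement. -/
noncomputable def failureSet [Fintype ι] (H : ι → Set Ω) (ω : Ω) : Finset ι :=
  {j | ω ∉ H j}.toFinset

theorem ncard_setOf_notMem_eq_card_failureSet [Fintype ι] (H : ι → Set Ω) (ω : Ω) :
    ({j | ω ∉ H j} : Set ι).ncard = (failureSet H ω).card := by
  classical
  rw [Set.ncard_eq_toFinset_card', failureSet]

theorem measurableSet_failureSet_eq [Fintype ι] (H : ι → Set Ω) (s : Finset ι) :
    MeasurableSet[generateFrom (Set.range H)] {ω | failureSet H ω = s} := by
  have hfiber : {ω | failureSet H ω = s} = ⋂ j, {ω | ω ∉ H j ↔ j ∈ s} := by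
    ext ω
    simp [failureSet, Finset.ext_iff]
  rw [hfiber]
  refine .iInter fun j => ?_
  have hHj : MeasurableSet[generateFrom (Set.range H)] (H j) :=
    measurableSet_generateFrom ⟨j, rfl⟩
  by_cases hjs : j ∈ s
  · convert hHj.compl using 1
    ext ω
    simp [hjs]
  · convert hHj using 1
    ext ω
    simp [hjs]

theorem measure_iInter_inter_le_pow_of_le_card [Fintype ι] [IsProbabilityMeasure P]
    {F E H : ι → Set Ω} {a : ℝ≥0∞} (hH : ∀ j, MeasurableSet (H j))
    (hFEH : ∀ j, F j ⊆ E j ∪ H j)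
    (hindep : ∀ j, Indep (generateFrom {E j})
      (generateFrom (Set.range H ∪ {s | ∃ i, i ≠ j ∧ s = E i})) P)
    (hE : ∀ j, P (E j) ≤ a) (ha : a ≤ 1) (K : ℕ) :
    P ((⋂ j, F j) ∩ {ω | K ≤ (failureSet H ω).card}) ≤ a ^ K := by
  set bigSets := Finset.univ.filter fun s : Finset ι => K ≤ s.card
  have hfiber_meas : ∀ s, MeasurableSet (failureSet H ⁻¹' {s}) := fun s =>
    generateFrom_le (by rintro _ ⟨j, rfl⟩; exact hH j) _ (measurableSet_failureSet_eq H s)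
  have hcover : (⋂ j, F j) ∩ {ω | K ≤ (failureSet H ω).card} ⊆
      ⋃ s ∈ bigSets, (⋂ j ∈ s, E j) ∩ failureSet H ⁻¹' {s} := by
    rintro ω ⟨hωF, hωK⟩
    refine Set.mem_biUnion (x := failureSet H ω) (by simpa [bigSets] using hωK) ⟨?_, rfl⟩
    refine Set.mem_biInter fun j hj => ?_
    have hωH : ω ∉ H j := by simpa [failureSet] using hj
    exact (hFEH j (Set.mem_iInter.1 hωF j)).resolve_right hωH
  calc P ((⋂ j, F j) ∩ {ω | K ≤ (failureSet H ω).card})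
      ≤ ∑ s ∈ bigSets, P ((⋂ j ∈ s, E j) ∩ failureSet H ⁻¹' {s}) :=
        (measure_mono hcover).trans (measure_biUnion_finset_le _ _)
    _ ≤ ∑ s ∈ bigSets, a ^ K * P (failureSet H ⁻¹' {s}) := by
        refine Finset.sum_le_sum fun s hs => ?_
        refine (measure_biInter_inter_le_pow hindep hE s
          (measurableSet_failureSet_eq H s)).trans (mul_le_mul_left ?_ _)
        exact pow_le_pow_right_of_le_one' ha (Finset.mem_filter.1 hs).2
    _ = a ^ K * P (failureSet H ⁻¹' bigSets) := by
        rw [← Finset.mul_sum, sum_measure_preimage_singleton _ fun s _ => hfiber_meas s]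
    _ ≤ a ^ K := mul_le_of_le_one_right' prob_le_one

end

theorem stmt_12_general {Ω : Type*} [MeasurableSpace Ω] (P : Measure Ω) [IsProbabilityMeasure P]
    (n : ℕ) (F Ft H : Fin n → Set Ω)
    (hH : ∀ j, MeasurableSet (H j))
    (hP1 : ∀ j, F j ⊆ Ft j ∪ H j)
    (hP2 : ∀ j, ProbabilityTheory.Indep (MeasurableSpace.generateFrom {Ft j})
      (MeasurableSpace.generateFrom (Set.range H ∪ {s | ∃ i, i ≠ j ∧ s = Ft i})) P)
    (c : ℝ) (hc1 : c < 1) (hP3 : ∀ j, P (Ft j) ≤ ENNReal.ofReal c)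
    (K : ℕ) :
    P (⋂ j, F j) ≤ ENNReal.ofReal c ^ K +
      P {ω | ({j | ω ∉ H j} : Set (Fin n)).ncard < K} := by
  have hc : ENNReal.ofReal c ≤ 1 := ENNReal.ofReal_le_one.2 hc1.le
  calc P (⋂ j, F j)
      ≤ P ((⋂ j, F j) ∩ {ω | K ≤ (failureSet H ω).card}) +
          P ((⋂ j, F j) \ {ω | K ≤ (failureSet H ω).card}) :=
        measure_le_inter_add_sdiff _ _ _
    _ ≤ ENNReal.ofReal c ^ K + P {ω | ({j | ω ∉ H j} : Set (Fin n)).ncard < K} := by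
        refine add_le_add (measure_iInter_inter_le_pow_of_le_card hH hP1 hP2 hP3 hc K)
          (measure_mono fun ω hω => ?_)
        simpa [ncard_setOf_notMem_eq_card_failureSet] using hω.2

theorem stmt_12 {Ω : Type*} [MeasurableSpace Ω] (P : Measure Ω) [IsProbabilityMeasure P]
    (n : ℕ) (F Ft H : Fin n → Set Ω)
    (hF : ∀ j, MeasurableSet (F j)) (hFt : ∀ j, MeasurableSet (Ft j))
    (hH : ∀ j, MeasurableSet (H j))
    (hP1 : ∀ j, F j ⊆ Ft j ∪ H j)
    (hP2 : ∀ j, ProbabilityTheory.Indep (MeasurableSpace.generateFrom {Ft j})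
      (MeasurableSpace.generateFrom (Set.range H ∪ {s | ∃ i, i ≠ j ∧ s = Ft i})) P)
    (c : ℝ) (hc0 : 0 < c) (hc1 : c < 1) (hP3 : ∀ j, P (Ft j) ≤ ENNReal.ofReal c)
    (K : ℕ) (hK : 1 ≤ K) (hKn : K ≤ n) :
    P (⋂ j, F j) ≤ ENNReal.ofReal c ^ K +
      P {ω | ({j | ω ∉ H j} : Set (Fin n)).ncard < K} :=
  stmt_12_general P n F Ft H hH hP1 hP2 c hc1 hP3 K
end

section
/- Under assumptions (P1)–(P3) as above, P(∩_{j=1}^n F_j) ≤ E[c^{|S|}] where S = {j : H_j^c occurs}. -/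
/-!
Split Ω according to the random set `S = {j | ω ∉ H j}`. On `{S = T}` the event `⋂ j, F j` forces
`Ft i` for every `i ∈ T`, and `{S = T}` is measurable with respect to the `H`'s, so repeatedly
peeling off one `Ft i` by independence gives `P (⋂ F ∩ {S = T}) ≤ c ^ |T| * P {S = T}`.
Summing over `T` gives `E[c ^ |S|]`.
-/

open MeasureTheory ProbabilityTheory MeasurableSpace

section

variable {Ω : Type*} [MeasurableSpace Ω]

theorem measure_inter_biInter_eq_prod_mul {ι : Type*} {P : Measure Ω}
    {G : Set (Set Ω)} {E : ι → Set Ω}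
    (hE : ∀ j, Indep (generateFrom {E j}) (generateFrom (G ∪ {s | ∃ i, i ≠ j ∧ s = E i})) P)
    {B : Set Ω} (hB : MeasurableSet[generateFrom G] B) (T : Finset ι) :
    P (B ∩ ⋂ i ∈ T, E i) = (∏ i ∈ T, P (E i)) * P B := by
  classical
  induction T using Finset.induction with
  | empty => simp
  | @insert j T hj ih =>
    have hrest : MeasurableSet[generateFrom (G ∪ {s | ∃ i, i ≠ j ∧ s = E i})]
        (B ∩ ⋂ i ∈ T, E i) := by
      refine .inter (generateFrom_mono Set.subset_union_left _ hB)
        (.biInter (Set.to_countable _) fun i hi => measurableSet_generateFrom ?_)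
      exact .inr ⟨i, ne_of_mem_of_not_mem hi hj, rfl⟩
    have hsplit : B ∩ ⋂ i ∈ insert j T, E i = E j ∩ (B ∩ ⋂ i ∈ T, E i) := by
      rw [Finset.set_biInter_insert, Set.inter_left_comm]
    rw [hsplit, (Indep_iff _ _ _).1 (hE j) _ _ (measurableSet_generateFrom rfl) hrest, ih,
      Finset.prod_insert hj]
    ring

theorem lintegral_comp_eq_sum_mul_measure_preimage {α : Type*} [MeasurableSpace α]
    [MeasurableSingletonClass α] [Fintype α] {μ : Measure Ω} {f : Ω → α} (hf : Measurable f)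
    (g : α → ENNReal) :
    ∫⁻ ω, g (f ω) ∂μ = ∑ a, g a * μ (f ⁻¹' {a}) := by
  rw [← lintegral_map (measurable_of_finite g) hf, lintegral_fintype]
  simp_rw [Measure.map_apply hf (measurableSet_singleton _)]

end

section

variable {Ω ι : Type*} [Fintype ι]

open Classical in
noncomputable def notMemIndices (H : ι → Set Ω) (ω : Ω) : Finset ι :=
  {j | ω ∉ H j}

@[simp]
theorem mem_notMemIndices {H : ι → Set Ω} {ω : Ω} {j : ι} :
    j ∈ notMemIndices H ω ↔ ω ∉ H j := by
  simp [notMemIndices]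

theorem coe_notMemIndices (H : ι → Set Ω) (ω : Ω) :
    (notMemIndices H ω : Set ι) = {j | ω ∉ H j} := by
  ext; simp

theorem measurable_notMemIndices [MeasurableSpace Ω] {H : ι → Set Ω}
    (hH : ∀ j, MeasurableSet (H j)) : Measurable (notMemIndices H) := by
  refine measurable_finset_iff.2 fun j => ?_
  simp only [mem_notMemIndices]
  exact measurableSet_setOfPred.1 (hH j).compl

end

theorem stmt_13_general {Ω : Type*} [MeasurableSpace Ω] (P : Measure Ω)
    (n : ℕ) (F Ft H : Fin n → Set Ω)
    (hH : ∀ j, MeasurableSet (H j))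
    (hP1 : ∀ j, F j ⊆ Ft j ∪ H j)
    (hP2 : ∀ j, ProbabilityTheory.Indep (MeasurableSpace.generateFrom {Ft j})
      (MeasurableSpace.generateFrom (Set.range H ∪ {s | ∃ i, i ≠ j ∧ s = Ft i})) P)
    (c : ℝ) (hc0 : 0 < c) (hP3 : ∀ j, P (Ft j) ≤ ENNReal.ofReal c) :
    P (⋂ j, F j) ≤
      ∫⁻ ω, ENNReal.ofReal (c ^ ({j | ω ∉ H j} : Set (Fin n)).ncard) ∂P := by
  set S := notMemIndices H
  have hS : Measurable[generateFrom (Set.range H)] S :=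
    @measurable_notMemIndices _ _ _ (generateFrom _) _ fun j =>
      measurableSet_generateFrom ⟨j, rfl⟩
  have hcover : ⋂ j, F j ⊆ ⋃ T, S ⁻¹' {T} ∩ ⋂ i ∈ T, Ft i := by
    intro ω hω
    refine Set.mem_iUnion.2 ⟨S ω, rfl, Set.mem_iInter₂.2 fun i hi => ?_⟩
    exact (hP1 i (Set.mem_iInter.1 hω i)).resolve_right (mem_notMemIndices.1 hi)
  calc P (⋂ j, F j) ≤ P (⋃ T, S ⁻¹' {T} ∩ ⋂ i ∈ T, Ft i) := measure_mono hcover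
    _ ≤ ∑ T, P (S ⁻¹' {T} ∩ ⋂ i ∈ T, Ft i) := measure_iUnion_fintype_le _ _
    _ = ∑ T, (∏ i ∈ T, P (Ft i)) * P (S ⁻¹' {T}) := by
      simp_rw [measure_inter_biInter_eq_prod_mul hP2 (hS (measurableSet_singleton _))]
    _ ≤ ∑ T, ENNReal.ofReal (c ^ T.card) * P (S ⁻¹' {T}) := by
      gcongr with T
      rw [ENNReal.ofReal_pow hc0.le]
      exact Finset.prod_le_pow_card _ _ _ fun i _ => hP3 i
    _ = ∫⁻ ω, ENNReal.ofReal (c ^ ({j | ω ∉ H j} : Set (Fin n)).ncard) ∂P := by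
      simp_rw [← coe_notMemIndices, Set.ncard_coe_finset]
      exact (lintegral_comp_eq_sum_mul_measure_preimage (measurable_notMemIndices hH) _).symm

theorem stmt_13 {Ω : Type*} [MeasurableSpace Ω] (P : Measure Ω) [IsProbabilityMeasure P]
    (n : ℕ) (F Ft H : Fin n → Set Ω)
    (hF : ∀ j, MeasurableSet (F j)) (hFt : ∀ j, MeasurableSet (Ft j))
    (hH : ∀ j, MeasurableSet (H j))
    (hP1 : ∀ j, F j ⊆ Ft j ∪ H j)
    (hP2 : ∀ j, ProbabilityTheory.Indep (MeasurableSpace.generateFrom {Ft j})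
      (MeasurableSpace.generateFrom (Set.range H ∪ {s | ∃ i, i ≠ j ∧ s = Ft i})) P)
    (c : ℝ) (hc0 : 0 < c) (hc1 : c < 1) (hP3 : ∀ j, P (Ft j) ≤ ENNReal.ofReal c) :
    P (⋂ j, F j) ≤
      ∫⁻ ω, ENNReal.ofReal (c ^ ({j | ω ∉ H j} : Set (Fin n)).ncard) ∂P :=
  stmt_13_general P n F Ft H hH hP1 hP2 c hc0 hP3
end
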